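/- (Theorem 2) Let β*_new minimize F(β) = (1/n_new) Σ_{i∈D_new} ℓ_i(β) + (λ/2)‖β‖², and let β̂ ∈ ℝ^d be any point with full gradient g(β̂) = (1/n_new) Σ_{i∈D_new} ∇ℓ_i(β̂) + λ β̂. Then for any η ∈ ℝ^d, ηᵀβ̂ − (λ⁻¹/2) ηᵀg(β̂) − (λ⁻¹/2)‖η‖‖g(β̂)‖ ≤ ηᵀβ*_new ≤ ηᵀβ̂ − (λ⁻¹/2) ηᵀg(β̂) + (λ⁻¹/2)‖η‖‖g(β̂)‖. -/

import Mathlib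

/-!
At the minimizer `x₀` of `f + (λ/2)‖·‖²` the gradient of `f` is `-λ x₀`, so monotonicity of the
gradient of the convex function `f`, tested against any point `x`, gives
`⟪g, x₀ - x⟫ + λ‖x₀ - x‖² ≤ 0` where `g = ∇f(x) + λx` is the regularized gradient at `x`.
Completing the square, `x₀` lies in the closed ball of radius `‖g‖/(2λ)` around `x - g/(2λ)`,
and Cauchy–Schwarz bounds `⟪η, ·⟫` on that ball.
-/

open InnerProductSpace Set

theorem ConvexOn.fun_sum {𝕜 E β ι : Type*} [Semiring 𝕜] [PartialOrder 𝕜] [IsOrderedRing 𝕜]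
    [AddCommMonoid E] [AddCommMonoid β] [PartialOrder β] [IsOrderedAddMonoid β] [SMul 𝕜 E]
    [Module 𝕜 β] [PosSMulMono 𝕜 β] {s : Set E} {t : Finset ι} {f : ι → E → β} (hs : Convex 𝕜 s)
    (hf : ∀ i ∈ t, ConvexOn 𝕜 s (f i)) : ConvexOn 𝕜 s fun x => ∑ i ∈ t, f i x := by
  simpa only [← Finset.sum_apply] using
    Finset.sum_induction f (ConvexOn 𝕜 s) (fun _ _ => ConvexOn.add) (convexOn_const 0 hs) hf

section FirstOrder

variable {E : Type*} [NormedAddCommGroup E] [NormedSpace ℝ E] {s : Set E} {f : E → ℝ}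

theorem ConvexOn.add_fderiv_sub_le {f' : E →L[ℝ] ℝ} {x y : E} (hf : ConvexOn ℝ s f)
    (hx : x ∈ s) (hy : y ∈ s) (hf' : HasFDerivAt f f' x) : f x + f' (y - x) ≤ f y := by
  let L : ℝ →ᵃ[ℝ] E := AffineMap.lineMap x y
  have hφ : HasDerivAt (f ∘ L) (f' (y - x)) 0 := by
    refine HasFDerivAt.comp_hasDerivAt (0 : ℝ) ?_ AffineMap.hasDerivAt_lineMap
    simpa [L] using hf'
  have hslope := (hf.comp_affineMap L).le_slope_of_hasDerivAt
    (x := 0) (y := 1) (by simpa [L] using hx) (by simpa [L] using hy) one_pos hφ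
  simp only [slope_def_field, Function.comp_apply, L, AffineMap.lineMap_apply_zero,
    AffineMap.lineMap_apply_one] at hslope
  linarith

end FirstOrder

section InnerProduct

variable {F : Type*} [NormedAddCommGroup F] [InnerProductSpace ℝ F]

theorem norm_add_smul_le_of_inner_add_mul_norm_sq_nonpos {v g : F} {lam : ℝ} (hlam : 0 < lam)
    (h : ⟪g, v⟫_ℝ + lam * ‖v‖ ^ 2 ≤ 0) : ‖v + (lam⁻¹ / 2) • g‖ ≤ (lam⁻¹ / 2) * ‖g‖ := by
  have hsq : ‖v + (lam⁻¹ / 2) • g‖ ^ 2 =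
      ((lam⁻¹ / 2) * ‖g‖) ^ 2 + lam⁻¹ * (⟪g, v⟫_ℝ + lam * ‖v‖ ^ 2) := by
    rw [norm_add_sq_real, norm_smul, inner_smul_right, real_inner_comm,
      Real.norm_of_nonneg (by positivity)]
    field_simp
    ring
  rw [← sq_le_sq₀ (norm_nonneg _) (by positivity), hsq]
  nlinarith [inv_pos.2 hlam]

theorem abs_inner_sub_inner_le_of_norm_sub_le {x c : F} {r : ℝ} (h : ‖x - c‖ ≤ r) (η : F) :
    |⟪η, x⟫_ℝ - ⟪η, c⟫_ℝ| ≤ ‖η‖ * r := by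
  rw [← inner_sub_right]
  exact (abs_real_inner_le_norm η _).trans (mul_le_mul_of_nonneg_left h (norm_nonneg η))

end InnerProduct

section Gradient

variable {F : Type*} [NormedAddCommGroup F] [InnerProductSpace ℝ F] [CompleteSpace F]
  {f g : F → ℝ} {x : F} {G H : F}

theorem HasGradientAt.const_mul (c : ℝ) (hf : HasGradientAt f G x) :
    HasGradientAt (fun y => c * f y) (c • G) x := by
  rw [hasGradientAt_iff_hasFDerivAt, map_smul]
  exact hf.hasFDerivAt.const_mul c

theorem HasGradientAt.add (hf : HasGradientAt f G x) (hg : HasGradientAt g H x) :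
    HasGradientAt (fun y => f y + g y) (G + H) x := by
  rw [hasGradientAt_iff_hasFDerivAt, map_add]
  exact hf.hasFDerivAt.add hg.hasFDerivAt

theorem HasGradientAt.fun_sum {ι : Type*} {t : Finset ι} {f : ι → F → ℝ} {G : ι → F}
    (hf : ∀ i ∈ t, HasGradientAt (f i) (G i) x) :
    HasGradientAt (fun y => ∑ i ∈ t, f i y) (∑ i ∈ t, G i) x := by
  rw [hasGradientAt_iff_hasFDerivAt, map_sum]
  exact HasFDerivAt.fun_sum fun i hi => (hf i hi).hasFDerivAt

theorem hasGradientAt_norm_sq (x : F) : HasGradientAt (fun y => ‖y‖ ^ 2) ((2 : ℝ) • x) x := by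
  rw [hasGradientAt_iff_hasFDerivAt]
  refine (hasStrictFDerivAt_norm_sq x).hasFDerivAt.congr_fderiv ?_
  ext v
  simp

theorem IsLocalMin.hasGradientAt_eq_zero (hmin : IsLocalMin f x) (hf : HasGradientAt f G x) :
    G = 0 :=
  (toDual ℝ F).injective <| by simpa using hmin.hasFDerivAt_eq_zero hf.hasFDerivAt

theorem ConvexOn.add_inner_gradient_sub_le {s : Set F} {y : F} (hf : ConvexOn ℝ s f)
    (hx : x ∈ s) (hy : y ∈ s) (hG : HasGradientAt f G x) : f x + ⟪G, y - x⟫_ℝ ≤ f y := by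
  simpa using hf.add_fderiv_sub_le hx hy hG.hasFDerivAt

theorem ConvexOn.inner_gradient_sub_gradient_nonneg {s : Set F} {y : F} (hf : ConvexOn ℝ s f)
    (hx : x ∈ s) (hy : y ∈ s) (hG : HasGradientAt f G x) (hH : HasGradientAt f H y) :
    0 ≤ ⟪H - G, y - x⟫_ℝ := by
  have hxy := hf.add_inner_gradient_sub_le hx hy hG
  have hyx := hf.add_inner_gradient_sub_le hy hx hH
  rw [← neg_sub y x, inner_neg_right] at hyx
  rw [inner_sub_left]
  linarith

theorem ConvexOn.norm_sub_le_of_isLocalMin_add_norm_sq {lam : ℝ} {x₀ G₀ : F}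
    (hf : ConvexOn ℝ univ f) (hlam : 0 < lam)
    (hmin : IsLocalMin (fun y => f y + lam / 2 * ‖y‖ ^ 2) x₀)
    (hG₀ : HasGradientAt f G₀ x₀) (hG : HasGradientAt f G x) :
    ‖x₀ - (x - (lam⁻¹ / 2) • (G + lam • x))‖ ≤ (lam⁻¹ / 2) * ‖G + lam • x‖ := by
  have hopt : G₀ + lam • x₀ = 0 :=
    calc G₀ + lam • x₀ = G₀ + (lam / 2) • (2 : ℝ) • x₀ := by module
      _ = 0 := hmin.hasGradientAt_eq_zero (hG₀.add ((hasGradientAt_norm_sq x₀).const_mul _))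
  have hmono := hf.inner_gradient_sub_gradient_nonneg (mem_univ x) (mem_univ x₀) hG hG₀
  have hG₀' : G₀ - G = -((G + lam • x) + lam • (x₀ - x)) := by
    rw [eq_neg_of_add_eq_zero_left hopt]
    module
  rw [hG₀', inner_neg_left, inner_add_left, real_inner_smul_left,
    real_inner_self_eq_norm_sq] at hmono
  rw [sub_sub_eq_add_sub, add_sub_right_comm]
  exact norm_add_smul_le_of_inner_add_mul_norm_sq_nonpos hlam (by linarith)

end Gradient

theorem theorem2_bounds_from_suboptimal_general
    {d : ℕ} {ι : Type*} (D : Finset ι)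
    (ℓ : ι → EuclideanSpace ℝ (Fin d) → ℝ)
    (hdiff : ∀ i ∈ D, Differentiable ℝ (ℓ i))
    (hconv : ∀ i ∈ D, ConvexOn ℝ Set.univ (ℓ i))
    (lam : ℝ) (hlam : 0 < lam)
    (βnew βhat : EuclideanSpace ℝ (Fin d))
    (hmin : ∀ β, (1 / (D.card : ℝ)) * (∑ i ∈ D, ℓ i βnew) + (lam / 2) * ‖βnew‖ ^ 2 ≤
                 (1 / (D.card : ℝ)) * (∑ i ∈ D, ℓ i β) + (lam / 2) * ‖β‖ ^ 2)
    (g : EuclideanSpace ℝ (Fin d))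
    (hg : g = (1 / (D.card : ℝ)) • (∑ i ∈ D, gradient (ℓ i) βhat) + lam • βhat)
    (η : EuclideanSpace ℝ (Fin d)) :
    ⟪η, βhat⟫_ℝ - (lam⁻¹ / 2) * ⟪η, g⟫_ℝ - (lam⁻¹ / 2) * ‖η‖ * ‖g‖ ≤ ⟪η, βnew⟫_ℝ ∧
    ⟪η, βnew⟫_ℝ ≤ ⟪η, βhat⟫_ℝ - (lam⁻¹ / 2) * ⟪η, g⟫_ℝ + (lam⁻¹ / 2) * ‖η‖ * ‖g‖ := by
  set L := fun β => (1 / (D.card : ℝ)) * ∑ i ∈ D, ℓ i β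
  have hL_conv : ConvexOn ℝ univ L := by
    simpa only [smul_eq_mul] using (ConvexOn.fun_sum convex_univ hconv).smul (by positivity)
  have hL_grad (β) : HasGradientAt L ((1 / (D.card : ℝ)) • ∑ i ∈ D, gradient (ℓ i) β) β :=
    (HasGradientAt.fun_sum fun i hi => ((hdiff i hi) β).hasGradientAt).const_mul _
  have hball := hL_conv.norm_sub_le_of_isLocalMin_add_norm_sq hlam
    (.of_forall hmin) (hL_grad βnew) (hL_grad βhat)
  rw [← hg] at hball
  obtain ⟨hlower, hupper⟩ := abs_le.1 (abs_inner_sub_inner_le_of_norm_sub_le hball η)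
  rw [inner_sub_right, real_inner_smul_right] at hlower hupper
  constructor <;> linarith

theorem theorem2_bounds_from_suboptimal
    {d : ℕ} {ι : Type*} (D : Finset ι)
    (ℓ : ι → EuclideanSpace ℝ (Fin d) → ℝ)
    (hdiff : ∀ i ∈ D, Differentiable ℝ (ℓ i))
    (hconv : ∀ i ∈ D, ConvexOn ℝ Set.univ (ℓ i))
    (lam : ℝ) (hlam : 0 < lam)
    (hD : 0 < D.card)
    (βnew βhat : EuclideanSpace ℝ (Fin d))
    (hmin : ∀ β, (1 / (D.card : ℝ)) * (∑ i ∈ D, ℓ i βnew) + (lam / 2) * ‖βnew‖ ^ 2 ≤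
                 (1 / (D.card : ℝ)) * (∑ i ∈ D, ℓ i β) + (lam / 2) * ‖β‖ ^ 2)
    (g : EuclideanSpace ℝ (Fin d))
    (hg : g = (1 / (D.card : ℝ)) • (∑ i ∈ D, gradient (ℓ i) βhat) + lam • βhat)
    (η : EuclideanSpace ℝ (Fin d)) :
    ⟪η, βhat⟫_ℝ - (lam⁻¹ / 2) * ⟪η, g⟫_ℝ - (lam⁻¹ / 2) * ‖η‖ * ‖g‖ ≤ ⟪η, βnew⟫_ℝ ∧
    ⟪η, βnew⟫_ℝ ≤ ⟪η, βhat⟫_ℝ - (lam⁻¹ / 2) * ⟪η, g⟫_ℝ + (lam⁻¹ / 2) * ‖η‖ * ‖g‖ :=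
  theorem2_bounds_from_suboptimal_general D ℓ hdiff hconv lam hlam βnew βhat hmin g hg η
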